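/- For A ∈ M_{m×n} and B ∈ M_{p×q} with t = lcm(n,p), the DK-STP factors through a bridge matrix: A ⊛ B = A · Ψ_{n×p} · B, where Ψ_{n×p} := (I_n ⊗ 1ᵀ_{t/n})(I_p ⊗ 1_{t/p}) ∈ M_{n×p}. -/
import Mathlib


open Matrix Kronecker Finset

noncomputable section

/-- The all-ones column vector of length `k`, viewed as a `k × 1` matrix. -/
def onesCol (k : ℕ) : Matrix (Fin k) (Fin 1) ℝ := Matrix.of fun _ _ => 1

/-- `A ⊗ 1ᵀ_α`, reindexed to an ordinary `Fin`-indexed matrix. -/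
def rightExpand {m n : ℕ} (A : Matrix (Fin m) (Fin n) ℝ) (α : ℕ) :
    Matrix (Fin m) (Fin (n * α)) ℝ :=
  Matrix.reindex (Equiv.prodUnique (Fin m) (Fin 1)) finProdFinEquiv (A ⊗ₖ (onesCol α)ᵀ)

/-- `B ⊗ 1_β`, reindexed to an ordinary `Fin`-indexed matrix. -/
def leftExpand {p q : ℕ} (B : Matrix (Fin p) (Fin q) ℝ) (β : ℕ) :
    Matrix (Fin (p * β)) (Fin q) ℝ :=
  Matrix.reindex finProdFinEquiv (Equiv.prodUnique (Fin q) (Fin 1)) (B ⊗ₖ onesCol β)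

theorem dk_dim_eq (n p : ℕ) :
    n * (Nat.lcm n p / n) = p * (Nat.lcm n p / p) := by
  rw [Nat.mul_div_cancel' (Nat.dvd_lcm_left n p),
    Nat.mul_div_cancel' (Nat.dvd_lcm_right n p)]

/-- The dimension keeping semi-tensor product (DK-STP)
`A ⊛ B := (A ⊗ 1ᵀ_{t/n})(B ⊗ 1_{t/p})`, `t = lcm(n,p)`. -/
def dkstp {m n p q : ℕ} (A : Matrix (Fin m) (Fin n) ℝ) (B : Matrix (Fin p) (Fin q) ℝ) :
    Matrix (Fin m) (Fin q) ℝ :=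
  rightExpand A (Nat.lcm n p / n) *
    (leftExpand B (Nat.lcm n p / p)).submatrix (Fin.cast (dk_dim_eq n p)) id

infixl:70 " ⊛ " => dkstp

/-- The bridge matrix `Ψ_{n×p} := (I_n ⊗ 1ᵀ_{t/n})(I_p ⊗ 1_{t/p})`. -/
def bridge (n p : ℕ) : Matrix (Fin n) (Fin p) ℝ :=
  (1 : Matrix (Fin n) (Fin n) ℝ) ⊛ (1 : Matrix (Fin p) (Fin p) ℝ)

/-- `x ⊗ 1_α`, as a vector of length `m * α`. -/
def vecExpand {m : ℕ} (x : Fin m → ℝ) (α : ℕ) : Fin (m * α) → ℝ :=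
  fun i => x (finProdFinEquiv.symm i).1

/-- The VV-STP `x ⊙ y := (x ⊗ 1_{t/m})ᵀ(y ⊗ 1_{t/n})`, `t = lcm(m,n)`. -/
def vvstp {m n : ℕ} (x : Fin m → ℝ) (y : Fin n → ℝ) : ℝ :=
  vecExpand x (Nat.lcm m n / m) ⬝ᵥ
    fun i => vecExpand y (Nat.lcm m n / n) (Fin.cast (dk_dim_eq m n) i)



lemma rightExpand_apply {m n : ℕ} (A : Matrix (Fin m) (Fin n) ℝ) (α : ℕ)
    (i : Fin m) (k : Fin (n * α)) :
    rightExpand A α i k = A i (finProdFinEquiv.symm k).1 := by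
  simp [rightExpand, onesCol]

lemma leftExpand_apply {p q : ℕ} (B : Matrix (Fin p) (Fin q) ℝ) (β : ℕ)
    (i : Fin (p * β)) (j : Fin q) :
    leftExpand B β i j = B (finProdFinEquiv.symm i).1 j := by
  simp [leftExpand, onesCol]

lemma rightExpand_eq {m n : ℕ} (A : Matrix (Fin m) (Fin n) ℝ) (α : ℕ) :
    rightExpand A α = A * rightExpand (1 : Matrix (Fin n) (Fin n) ℝ) α := by
  ext i k
  simp [rightExpand_apply, Matrix.mul_apply, Matrix.one_apply, mul_ite]

lemma leftExpand_eq {p q : ℕ} (B : Matrix (Fin p) (Fin q) ℝ) (β : ℕ) :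
    leftExpand B β = leftExpand (1 : Matrix (Fin p) (Fin p) ℝ) β * B := by
  ext i j
  simp [leftExpand_apply, Matrix.mul_apply, Matrix.one_apply, ite_mul]

/-- the DK-STP factors through the bridge matrix: `A ⊛ B = A Ψ_{n×p} B`. -/
theorem stmt4 {m n p q : ℕ} (A : Matrix (Fin m) (Fin n) ℝ) (B : Matrix (Fin p) (Fin q) ℝ) :
    A ⊛ B = A * bridge n p * B := by
  unfold dkstp bridge
  rw [rightExpand_eq, leftExpand_eq]
  have hsub : ((leftExpand (1 : Matrix (Fin p) (Fin p) ℝ) (Nat.lcm n p / p) * B).submatrix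
      (Fin.cast (dk_dim_eq n p)) id)
      = (leftExpand (1 : Matrix (Fin p) (Fin p) ℝ) (Nat.lcm n p / p)).submatrix
        (Fin.cast (dk_dim_eq n p)) id * B := by
    ext i j; simp [Matrix.mul_apply, Matrix.submatrix_apply]
  rw [hsub, ← Matrix.mul_assoc, Matrix.mul_assoc A]
  rfl
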